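/- Let γ ≥ 1 and b > 0 be real numbers, set c = (1 − √γ)² and d = (1 + √γ)², and consider the averaged secular equation of the rank-one spiked Wishart ensemble with aspect ratio γ, 1 = b · ( (γ − 1)/w + ∫_{c}^{d} ((x − c)(d − x))^{1/2}/(2πx·(w − x)) dx ), as an equation for w in the range w > d. If b > 1 + 1/√γ, then this equation has a unique solution with w > d, namely w = b·(γ + 1/(b − 1)). If 0 < b ≤ 1 + 1/√γ, then the equation has no solution with w > d. -/

import Mathlib

/-!
For `0 ≤ c < d < w` the integral has the closed form `(w - √(cd) - √((w - c)(w - d))) / (2w)`: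
after the partial fraction `1 / (x (w - x)) = (1 / x + 1 / (w - x)) / w`, the integrand is a
combination of derivatives of arcsines of Möbius maps sending `c, d` to `-1, 1`.
With `s = √γ` one has `√(cd) = γ - 1`, so the equation reads
`2w = b (w + γ - 1 - √((w - c)(w - d)))`. Squaring makes it linear, `(b - 1)(w - bγ) = b`,
which forces `b > 1` and `w = b (γ + 1 / (b - 1))`.
At that point the radical is `|(b - 1)² γ - 1| / (b - 1)`, and the equation holds exactly when the
absolute value can be dropped, i.e. when `(b - 1) √γ ≥ 1`; equality there means `w = d`.
-/

open Real Set

theorem HasDerivAt.arcsin_of_one_sub_sq_eq {g : ℝ → ℝ} {g' r x : ℝ} (hg : HasDerivAt g g' x)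
    (hr : 0 < r) (h : 1 - g x ^ 2 = r ^ 2) : HasDerivAt (fun y => arcsin (g y)) (g' / r) x := by
  have hne : g x ≠ -1 ∧ g x ≠ 1 := by
    constructor <;> rintro hx <;> rw [hx] at h <;> nlinarith
  have h' := (Real.hasDerivAt_arcsin hne.1 hne.2).comp x hg
  rw [h, Real.sqrt_sq hr.le, one_div_mul_eq_div] at h'
  exact h'

theorem hasDerivAt_arcsin_affine {c d x : ℝ} (hcx : c < x) (hxd : x < d) :
    HasDerivAt (fun y => arcsin ((2 * y - (c + d)) / (d - c))) (1 / √((x - c) * (d - x))) x := by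
  have hdc : 0 < d - c := by linarith
  have hQ : 0 < (x - c) * (d - x) := mul_pos (by linarith) (by linarith)
  have hr := Real.sq_sqrt hQ.le
  have hr0 := Real.sqrt_pos.2 hQ
  have hg : HasDerivAt (fun y => (2 * y - (c + d)) / (d - c)) (2 / (d - c)) x := by
    simpa using (((hasDerivAt_id x).const_mul 2).sub_const (c + d)).div_const (d - c)
  refine (hg.arcsin_of_one_sub_sq_eq (r := 2 * √((x - c) * (d - x)) / (d - c)) (by positivity)
    (by field_simp; linear_combination (-4) * hr)).congr_deriv ?_
  field_simp

/-- For `c = 0` the Möbius map degenerates, but the weight `√(cd)` vanishes. -/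
noncomputable def weightedArcsin (c d x : ℝ) : ℝ :=
  √(c * d) * arcsin (((c + d) * x - 2 * (c * d)) / ((d - c) * x))

theorem hasDerivAt_weightedArcsin {c d x : ℝ} (hc : 0 ≤ c) (hcx : c < x) (hxd : x < d) :
    HasDerivAt (weightedArcsin c d) (c * d / (x * √((x - c) * (d - x)))) x := by
  rcases hc.eq_or_lt with rfl | hc
  · have : weightedArcsin 0 d = fun _ => 0 := by ext; simp [weightedArcsin]
    simpa [this] using hasDerivAt_const x (0 : ℝ)
  have hx : 0 < x := hc.trans hcx
  have hdc : 0 < d - c := by linarith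
  have hQ : 0 < (x - c) * (d - x) := mul_pos (by linarith) (by linarith)
  have hr := Real.sq_sqrt hQ.le
  have hr0 := Real.sqrt_pos.2 hQ
  have he := Real.sq_sqrt (mul_pos hc (hc.trans (hcx.trans hxd))).le
  have he0 := Real.sqrt_pos.2 (mul_pos hc (hc.trans (hcx.trans hxd)))
  have hg : HasDerivAt (fun y => ((c + d) * y - 2 * (c * d)) / ((d - c) * y))
      (2 * (c * d) / ((d - c) * x ^ 2)) x := by
    refine ((((hasDerivAt_id x).const_mul (c + d)).sub_const (2 * (c * d))).div
      ((hasDerivAt_id x).const_mul (d - c)) (by positivity)).congr_deriv ?_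
    simp only [id]
    field_simp
    ring
  refine ((hg.arcsin_of_one_sub_sq_eq
    (r := 2 * √(c * d) * √((x - c) * (d - x)) / ((d - c) * x)) (by positivity)
    (by field_simp; linear_combination (-4 * √((x - c) * (d - x)) ^ 2) * he + (-4 * c * d) * hr)
    ).const_mul √(c * d)).congr_deriv ?_
  field_simp

theorem continuousOn_weightedArcsin {c d : ℝ} (hc : 0 ≤ c) (hcd : c < d) :
    ContinuousOn (weightedArcsin c d) (Icc c d) := by
  rcases hc.eq_or_lt with rfl | hc
  · have : weightedArcsin 0 d = fun _ => 0 := by ext; simp [weightedArcsin]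
    simpa [this] using continuousOn_const
  refine continuousOn_const.mul (continuous_arcsin.comp_continuousOn ?_)
  refine (Continuous.continuousOn (by fun_prop)).div (Continuous.continuousOn (by fun_prop)) ?_
  intro y hy
  have : 0 < y := hc.trans_le hy.1
  have : 0 < d - c := by linarith
  positivity

theorem weightedArcsin_sub {c d : ℝ} (hc : 0 ≤ c) (hcd : c < d) :
    weightedArcsin c d d - weightedArcsin c d c = π * √(c * d) := by
  rcases hc.eq_or_lt with rfl | hc
  · simp [weightedArcsin]
  have hdc : d - c ≠ 0 := by linarith
  have hd : d ≠ 0 := by linarith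
  have h1 : ((c + d) * d - 2 * (c * d)) / ((d - c) * d) = 1 := by field_simp; ring
  have h2 : ((c + d) * c - 2 * (c * d)) / ((d - c) * c) = -1 := by field_simp; ring
  rw [weightedArcsin, weightedArcsin, h1, h2, arcsin_one, arcsin_neg_one]
  ring

theorem integral_sqrt_div_mul_sub_eq {c d w : ℝ} (hc : 0 ≤ c) (hcd : c < d) (hdw : d < w) :
    ∫ x in c..d, √((x - c) * (d - x)) / (2 * π * x * (w - x))
      = (w - √(c * d) - √((w - c) * (w - d))) / (2 * w) := by
  have hw : 0 < w := by linarith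
  -- the last term is the middle one for the edges `w - d, w - c` seen from `w`; it produces the
  -- partial fraction `1 / (w - x)`
  set F : ℝ → ℝ := fun x => (w * arcsin ((2 * x - (c + d)) / (d - c)) - weightedArcsin c d x
    + weightedArcsin (w - d) (w - c) (w - x)) / (2 * π * w) with hF
  have hderiv : ∀ x ∈ Ioo c d,
      HasDerivAt F (√((x - c) * (d - x)) / (2 * π * x * (w - x))) x := by
    rintro x ⟨hcx, hxd⟩
    have hx : 0 < x := hc.trans_lt hcx
    have hQ : 0 < (x - c) * (d - x) := mul_pos (by linarith) (by linarith)
    have hr := Real.sq_sqrt hQ.le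
    have hr0 := Real.sqrt_pos.2 hQ
    have hrefl := (hasDerivAt_weightedArcsin (c := w - d) (d := w - c) (x := w - x)
      (by linarith) (by linarith) (by linarith)).comp x ((hasDerivAt_id x).const_sub w)
    rw [show (w - x - (w - d)) * (w - c - (w - x)) = (x - c) * (d - x) by ring] at hrefl
    refine ((((hasDerivAt_arcsin_affine hcx hxd).const_mul w).sub
      (hasDerivAt_weightedArcsin hc hcx hxd)).add hrefl).div_const (2 * π * w) |>.congr_deriv ?_
    have : w - x ≠ 0 := by linarith
    field_simp
    linear_combination (-w) * hr
  have hnonneg : ∀ x ∈ Ioo c d, 0 ≤ √((x - c) * (d - x)) / (2 * π * x * (w - x)) := by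
    rintro x ⟨hcx, hxd⟩
    have : 0 < x := hc.trans_lt hcx
    have : 0 < w - x := by linarith
    positivity
  have hcont : ContinuousOn F (Icc c d) := by
    refine ContinuousOn.div_const (ContinuousOn.add (ContinuousOn.sub ?_ ?_) ?_) _
    · exact Continuous.continuousOn (by fun_prop)
    · exact continuousOn_weightedArcsin hc hcd
    · refine (continuousOn_weightedArcsin (by linarith) (by linarith)).comp
        (Continuous.continuousOn (by fun_prop)) ?_
      rintro x ⟨hcx, hxd⟩
      constructor <;> linarith
  rw [intervalIntegral.integral_eq_sub_of_hasDerivAt_of_le hcd.le hcont hderiv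
    (intervalIntegral.intervalIntegrable_deriv_of_nonneg (uIcc_of_le hcd.le ▸ hcont) ?_ ?_)]
  · have hdc : d - c ≠ 0 := by linarith
    have hAd : (2 * d - (c + d)) / (d - c) = 1 := by field_simp; ring
    have hAc : (2 * c - (c + d)) / (d - c) = -1 := by field_simp; ring
    have h1 := weightedArcsin_sub hc hcd
    have h2 := weightedArcsin_sub (c := w - d) (d := w - c) (by linarith) (by linarith)
    rw [mul_comm (w - d)] at h2
    simp only [hF, hAd, hAc, arcsin_one, arcsin_neg_one]
    rw [div_sub_div_same, div_eq_div_iff (by positivity) (by positivity)]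
    linear_combination (-2) * w * h1 - 2 * w * h2
  · simpa [hcd.le] using hderiv
  · simpa [hcd.le] using hnonneg

noncomputable def mpRadical (s w : ℝ) : ℝ := √((w - (1 - s) ^ 2) * (w - (1 + s) ^ 2))

theorem mpRadical_sq {s w : ℝ} (hs : 0 ≤ s) (hw : (1 + s) ^ 2 ≤ w) :
    mpRadical s w ^ 2 = (w - (1 - s) ^ 2) * (w - (1 + s) ^ 2) :=
  sq_sqrt (mul_nonneg (by nlinarith) (by linarith))

theorem one_lt_and_eq_of_secular {s b w : ℝ} (hs : 0 ≤ s) (hw : (1 + s) ^ 2 < w)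
    (h : 2 * w = b * (w + s ^ 2 - 1 - mpRadical s w)) :
    1 < b ∧ w = b * (s ^ 2 + 1 / (b - 1)) := by
  have hsq : (b * mpRadical s w) ^ 2 = (b * (w + s ^ 2 - 1) - 2 * w) ^ 2 := by
    congr 1; linarith
  rw [mul_pow, mpRadical_sq hs hw.le] at hsq
  have hw0 : 0 < w := by nlinarith
  have hlin : (b - 1) * (w - b * s ^ 2) = b := by
    have : 4 * w * ((b - 1) * (w - b * s ^ 2) - b) = 0 := by linear_combination hsq
    have := (mul_eq_zero.1 this).resolve_left (by positivity)
    linarith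
  have hb1 : 1 < b := by
    by_contra! hb1
    nlinarith [mul_le_mul_of_nonneg_right hb1 (sq_nonneg s)]
  refine ⟨hb1, ?_⟩
  have : b - 1 ≠ 0 := by linarith
  field_simp
  linear_combination hlin

theorem spike_sub_edge_mul {s b : ℝ} (hb : 1 < b) :
    (b * (s ^ 2 + 1 / (b - 1)) - (1 + s) ^ 2) * (b - 1) = ((b - 1) * s - 1) ^ 2 := by
  have : b - 1 ≠ 0 := by linarith
  field_simp
  ring

theorem mpRadical_spike_mul {s b : ℝ} (hb : 1 < b) :
    mpRadical s (b * (s ^ 2 + 1 / (b - 1))) * (b - 1) = |((b - 1) * s) ^ 2 - 1| := by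
  have hb0 : b - 1 ≠ 0 := by linarith
  have hprod : ((b * (s ^ 2 + 1 / (b - 1)) - (1 - s) ^ 2)
      * (b * (s ^ 2 + 1 / (b - 1)) - (1 + s) ^ 2)) * (b - 1) ^ 2 = (((b - 1) * s) ^ 2 - 1) ^ 2 := by
    field_simp
    ring
  calc mpRadical s (b * (s ^ 2 + 1 / (b - 1))) * (b - 1)
      = √(((b * (s ^ 2 + 1 / (b - 1)) - (1 - s) ^ 2) * (b * (s ^ 2 + 1 / (b - 1)) - (1 + s) ^ 2))
          * (b - 1) ^ 2) := by
        rw [sqrt_mul' _ (sq_nonneg _), sqrt_sq (by linarith)]; rfl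
    _ = |((b - 1) * s) ^ 2 - 1| := by rw [hprod, sqrt_sq_eq_abs]

theorem secular_at_spike_iff {s b : ℝ} (hs : 0 ≤ s) (hb : 1 < b) :
    2 * (b * (s ^ 2 + 1 / (b - 1))) = b * (b * (s ^ 2 + 1 / (b - 1)) + s ^ 2 - 1
      - mpRadical s (b * (s ^ 2 + 1 / (b - 1)))) ↔ 1 ≤ (b - 1) * s := by
  have hb0 : b - 1 ≠ 0 := by linarith
  have hR := mpRadical_spike_mul (s := s) hb
  set w₀ := b * (s ^ 2 + 1 / (b - 1)) with hw₀_def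
  have hw₀ : w₀ * (b - 1) = b * (s ^ 2 * (b - 1) + 1) := by
    rw [hw₀_def]; field_simp
  clear_value w₀
  calc 2 * w₀ = b * (w₀ + s ^ 2 - 1 - mpRadical s w₀)
        ↔ 2 * w₀ * (b - 1) = b * (w₀ + s ^ 2 - 1 - mpRadical s w₀) * (b - 1) :=
          (mul_left_inj' hb0).symm
    _ ↔ b * (mpRadical s w₀ * (b - 1)) = b * (((b - 1) * s) ^ 2 - 1) := by
          constructor <;> intro h
          · linear_combination h + (b - 2) * hw₀
          · linear_combination h + (2 - b) * hw₀
    _ ↔ mpRadical s w₀ * (b - 1) = ((b - 1) * s) ^ 2 - 1 := mul_right_inj' (by positivity)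
    _ ↔ 1 ≤ (b - 1) * s := by
          rw [hR, abs_eq_self, sub_nonneg, one_le_sq_iff₀ (by positivity)]

theorem mp_secular_eq_iff {s b w : ℝ} (hs : 1 ≤ s) (hw : (1 + s) ^ 2 < w) :
    1 = b * ((s ^ 2 - 1) / w + ∫ x in (1 - s) ^ 2..(1 + s) ^ 2,
      √((x - (1 - s) ^ 2) * ((1 + s) ^ 2 - x)) / (2 * π * x * (w - x)))
      ↔ 2 * w = b * (w + s ^ 2 - 1 - mpRadical s w) := by
  have hw0 : 0 < w := by nlinarith
  have hedges : √((1 - s) ^ 2 * (1 + s) ^ 2) = s ^ 2 - 1 := by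
    rw [show (1 - s) ^ 2 * (1 + s) ^ 2 = (s ^ 2 - 1) ^ 2 by ring, sqrt_sq (by nlinarith)]
  have hsum : (s ^ 2 - 1) / w + (w - (s ^ 2 - 1) - mpRadical s w) / (2 * w)
      = (w + s ^ 2 - 1 - mpRadical s w) / (2 * w) := by
    field_simp; ring
  rw [integral_sqrt_div_mul_sub_eq (sq_nonneg _) (by nlinarith) hw, hedges, ← mpRadical, hsum,
    mul_div_assoc', eq_div_iff (by positivity), one_mul, eq_comm]

theorem stmt_10_general (γ b : ℝ) (hγ : 1 ≤ γ)
    (c d : ℝ) (hc : c = (1 - Real.sqrt γ) ^ 2) (hd : d = (1 + Real.sqrt γ) ^ 2) :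
    (1 + 1 / Real.sqrt γ < b →
      (d < b * (γ + 1 / (b - 1)) ∧
        1 = b * ((γ - 1) / (b * (γ + 1 / (b - 1)))
            + ∫ x in c..d, Real.sqrt ((x - c) * (d - x))
                / (2 * π * x * (b * (γ + 1 / (b - 1)) - x))) ∧
        ∀ w : ℝ, d < w →
          1 = b * ((γ - 1) / w
              + ∫ x in c..d, Real.sqrt ((x - c) * (d - x)) / (2 * π * x * (w - x))) →
          w = b * (γ + 1 / (b - 1)))) ∧
    (b ≤ 1 + 1 / Real.sqrt γ → ∀ w : ℝ, d < w →
      1 ≠ b * ((γ - 1) / w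
          + ∫ x in c..d, Real.sqrt ((x - c) * (d - x)) / (2 * π * x * (w - x)))) := by
  obtain ⟨s, hs, rfl⟩ : ∃ s, 1 ≤ s ∧ γ = s ^ 2 :=
    ⟨√γ, one_le_sqrt.2 hγ, (sq_sqrt (by linarith)).symm⟩
  rw [sqrt_sq (by linarith)] at hc hd ⊢
  subst hc hd
  refine ⟨fun hb => ?_, fun hb w hw h => ?_⟩
  · have hu : 1 < (b - 1) * s := by rw [← div_lt_iff₀ (by linarith)]; linarith
    have hb1 : 1 < b := by nlinarith
    have hspike : (1 + s) ^ 2 < b * (s ^ 2 + 1 / (b - 1)) := by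
      have := (spike_sub_edge_mul (s := s) hb1).symm ▸ pow_pos (sub_pos.2 hu) 2
      exact sub_pos.1 (pos_of_mul_pos_left this (by linarith))
    refine ⟨hspike, (mp_secular_eq_iff hs hspike).2
      ((secular_at_spike_iff (by linarith) hb1).2 hu.le), fun w hw h => ?_⟩
    exact (one_lt_and_eq_of_secular (by linarith) hw ((mp_secular_eq_iff hs hw).1 h)).2
  · obtain ⟨hb1, rfl⟩ :=
      one_lt_and_eq_of_secular (by linarith) hw ((mp_secular_eq_iff hs hw).1 h)
    have hu := (secular_at_spike_iff (by linarith) hb1).1 ((mp_secular_eq_iff hs hw).1 h)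
    have hu' : (b - 1) * s ≤ 1 := by rw [← le_div_iff₀ (by linarith)]; linarith
    have := spike_sub_edge_mul (s := s) hb1
    rw [le_antisymm hu' hu, sub_self, zero_pow two_ne_zero] at this
    nlinarith

theorem stmt_10 (γ b : ℝ) (hγ : 1 ≤ γ) (hb : 0 < b)
    (c d : ℝ) (hc : c = (1 - Real.sqrt γ) ^ 2) (hd : d = (1 + Real.sqrt γ) ^ 2) :
    (1 + 1 / Real.sqrt γ < b →
      (d < b * (γ + 1 / (b - 1)) ∧
        1 = b * ((γ - 1) / (b * (γ + 1 / (b - 1)))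
            + ∫ x in c..d, Real.sqrt ((x - c) * (d - x))
                / (2 * π * x * (b * (γ + 1 / (b - 1)) - x))) ∧
        ∀ w : ℝ, d < w →
          1 = b * ((γ - 1) / w
              + ∫ x in c..d, Real.sqrt ((x - c) * (d - x)) / (2 * π * x * (w - x))) →
          w = b * (γ + 1 / (b - 1)))) ∧
    (b ≤ 1 + 1 / Real.sqrt γ → ∀ w : ℝ, d < w →
      1 ≠ b * ((γ - 1) / w
          + ∫ x in c..d, Real.sqrt ((x - c) * (d - x)) / (2 * π * x * (w - x)))) :=
  stmt_10_general γ b hγ c d hc hd
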